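/- Let B be a real symmetric n×n matrix and set β(x,y) = xᵀBy. Suppose there exists a function χ : ℤⁿ × ℤⁿ → ℂ, nowhere zero, such that exp(−2πi·β(x,y')) = χ(x+x', y+y') · χ(x,y)⁻¹ · χ(x',y')⁻¹ for all x, y, x', y' ∈ ℤⁿ (i.e. χ splits the cocycle e(−β(x,y'))). Then β(x,y) ∈ ℤ for all x, y ∈ ℤⁿ, i.e. B has integer entries. -/

import Mathlib

/-!
A coboundary `χ (a + b) / (χ a χ b)` on a commutative group is symmetric in `a` and `b`, whereas
the cocycle `e(−β(x, y'))` is not unless `β` is integral: comparing its values at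
`((x, 0), (0, y))` and `((0, y), (x, 0))` gives `e(−β(x, y)) = e(−β(0, 0)) = 1`.
-/

open Matrix Complex

theorem Complex.exp_neg_two_pi_I_mul_ofReal_eq_one_iff {t : ℝ} :
    exp (-2 * Real.pi * I * t) = 1 ↔ ∃ m : ℤ, t = m := by
  have h2πI : 2 * (Real.pi : ℂ) * I ≠ 0 := by simp [Real.pi_ne_zero, I_ne_zero]
  rw [exp_eq_one_iff]
  constructor
  · rintro ⟨k, hk⟩
    refine ⟨-k, ?_⟩
    have : (t : ℂ) = (-k : ℤ) := by
      push_cast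
      apply mul_left_cancel₀ h2πI
      linear_combination -hk
    exact_mod_cast this
  · rintro ⟨m, rfl⟩
    exact ⟨-m, by push_cast; ring⟩

theorem coboundary_comm {G M : Type*} [AddCommMagma G] [DivisionCommMonoid M] (χ : G → M)
    (a b : G) : χ (a + b) * (χ a)⁻¹ * (χ b)⁻¹ = χ (b + a) * (χ b)⁻¹ * (χ a)⁻¹ := by
  rw [add_comm, mul_right_comm]

theorem integral_of_cocycle_splits
    {n : ℕ} (B : Matrix (Fin n) (Fin n) ℝ)
    (χ : (Fin n → ℤ) × (Fin n → ℤ) → ℂ)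
    (hsplit : ∀ x y x' y' : Fin n → ℤ,
      Complex.exp (-2 * (Real.pi : ℂ) * Complex.I *
          ((((fun i => (x i : ℝ)) ⬝ᵥ B.mulVec (fun i => (y' i : ℝ))) : ℝ) : ℂ)) =
        χ (x + x', y + y') * (χ (x, y))⁻¹ * (χ (x', y'))⁻¹) :
    ∀ x y : Fin n → ℤ, ∃ m : ℤ,
      (fun i => (x i : ℝ)) ⬝ᵥ B.mulVec (fun i => (y i : ℝ)) = (m : ℝ) := by
  intro x y
  apply exp_neg_two_pi_I_mul_ofReal_eq_one_iff.mp
  have hxy := hsplit x 0 0 y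
  have hyx := hsplit 0 y x 0
  simp only [Pi.zero_apply, Int.cast_zero, zero_dotProduct', ofReal_zero, mul_zero,
    exp_zero] at hyx
  rw [hxy, hyx]
  exact coboundary_comm χ (x, 0) (0, y)
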